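/- Let x : [0,T] → ℝ^n be a C¹ solution of x'(t) = A x(t) + B u(t) + Σ_{i=1}^m N_i x(t) u_i(t) with x(0) = 0, and suppose P₂ is symmetric positive definite satisfying Aᵀ P₂⁻¹ + P₂⁻¹ A + Σ_{i=1}^m N_iᵀ P₂⁻¹ N_i ≤ −P₂⁻¹ B Bᵀ P₂⁻¹. Then (without any bound on u) for all t ∈ [0,T], x(t)ᵀ P₂⁻¹ x(t) ≤ (∫₀ᵗ ‖u(s)‖₂² ds) · exp(∫₀ᵗ ‖u(s)‖₂² ds). -/

import Mathlib

/-!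
With `V = xᵀ P₂⁻¹ x`, the Lyapunov inequality together with Young's inequality for the control
terms gives `V' ≤ ‖u‖² (1 + V)`. Gronwall's inequality for `1 + V`, which equals `1` at
`t = 0`, yields `1 + V t ≤ exp W` with `W = ∫₀ᵗ ‖u‖²`, and `exp W - 1 ≤ W exp W`.
-/

open Matrix BigOperators MeasureTheory intervalIntegral

open Set Real in
/-- Gronwall's inequality, via the integrating factor `exp (-∫ g)`. -/
theorem le_mul_exp_integral_of_hasDerivAt_le {f f' g : ℝ → ℝ} {a b : ℝ} (hg : Continuous g)
    (hf : ∀ t ∈ Icc a b, HasDerivAt f (f' t) t) (hbound : ∀ t ∈ Icc a b, f' t ≤ g t * f t) :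
    ∀ t ∈ Icc a b, f t ≤ f a * exp (∫ s in a..t, g s) := by
  set W : ℝ → ℝ := fun t => ∫ s in a..t, g s
  have hW (t : ℝ) : HasDerivAt W (g t) t := (hg.integral_hasStrictDerivAt a t).hasDerivAt
  have hF (t) (ht : t ∈ Icc a b) : HasDerivAt (fun s => f s * exp (-W s))
      (f' t * exp (-W t) + f t * (exp (-W t) * -g t)) t :=
    (hf t ht).mul (hW t).neg.exp
  have hanti : AntitoneOn (fun s => f s * exp (-W s)) (Icc a b) := by
    refine antitoneOn_of_hasDerivWithinAt_nonpos (convex_Icc a b)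
      (fun t ht => (hF t ht).continuousAt.continuousWithinAt)
      (fun t ht => (hF t (interior_subset ht)).hasDerivWithinAt) fun t ht => ?_
    have hle := hbound t (interior_subset ht)
    have hpos := exp_pos (-W t)
    nlinarith
  intro t ht
  have hFt : f t * exp (-W t) ≤ f a := by
    simpa [W] using hanti (left_mem_Icc.2 (ht.1.trans ht.2)) ht ht.1
  calc f t = f t * exp (-W t) * exp (W t) := by rw [mul_assoc, ← exp_add]; simp
    _ ≤ f a * exp (W t) := by gcongr

theorem Real.exp_sub_one_le_mul_exp (x : ℝ) : Real.exp x - 1 ≤ x * Real.exp x := by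
  have h := mul_le_mul_of_nonneg_right (Real.one_sub_le_exp_neg x) (Real.exp_pos x).le
  rw [← Real.exp_add, neg_add_cancel, Real.exp_zero] at h
  linarith

section Calculus

variable {𝕜 ι κ : Type*} [NontriviallyNormedField 𝕜] [Fintype ι]
  {f g : 𝕜 → ι → 𝕜} {f' g' : ι → 𝕜} {t : 𝕜}

theorem HasDerivAt.dotProduct (hf : HasDerivAt f f' t) (hg : HasDerivAt g g' t) :
    HasDerivAt (fun s => f s ⬝ᵥ g s) (f' ⬝ᵥ g t + f t ⬝ᵥ g') t := by
  rw [_root_.dotProduct, _root_.dotProduct, ← Finset.sum_add_distrib]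
  exact HasDerivAt.fun_sum fun i _ => (hasDerivAt_pi.1 hf i).mul (hasDerivAt_pi.1 hg i)

theorem HasDerivAt.mulVec (M : Matrix κ ι 𝕜) (hf : HasDerivAt f f' t) :
    HasDerivAt (fun s => M *ᵥ f s) (M *ᵥ f') t :=
  hasDerivAt_pi.2 fun j =>
    HasDerivAt.fun_sum fun i _ => (hasDerivAt_pi.1 hf i).const_mul (M j i)

theorem HasDerivAt.dotProduct_mulVec_self {M : Matrix ι ι 𝕜} (hM : M.IsSymm)
    (hf : HasDerivAt f f' t) :
    HasDerivAt (fun s => f s ⬝ᵥ M *ᵥ f s) (2 * (f t ⬝ᵥ M *ᵥ f')) t := by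
  convert hf.dotProduct (hf.mulVec M) using 1
  rw [← hM.eq, dotProduct_transpose_mulVec, two_mul, hM.eq]

end Calculus

theorem Matrix.PosSemidef.isSymm {ι : Type*} {P : Matrix ι ι ℝ} (hP : P.PosSemidef) :
    P.IsSymm :=
  isHermitian_iff_isSymm.1 hP.isHermitian

section Quadratic

variable {ι κ : Type*} [Fintype ι] [Fintype κ]

theorem Matrix.PosSemidef.two_mul_dotProduct_mulVec_le {P : Matrix ι ι ℝ} (hP : P.PosSemidef)
    (v w : ι → ℝ) : 2 * (v ⬝ᵥ P *ᵥ w) ≤ v ⬝ᵥ P *ᵥ v + w ⬝ᵥ P *ᵥ w := by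
  have hsymm : w ⬝ᵥ P *ᵥ v = v ⬝ᵥ P *ᵥ w := by rw [← dotProduct_transpose_mulVec, hP.isSymm.eq]
  have h := hP.dotProduct_mulVec_nonneg (v - w)
  simp only [star_trivial, mulVec_sub, dotProduct_sub, sub_dotProduct, hsymm] at h
  linarith

def bilinearVectorField (A : Matrix ι ι ℝ) (B : Matrix ι κ ℝ) (N : κ → Matrix ι ι ℝ)
    (v : ι → ℝ) (w : κ → ℝ) : ι → ℝ :=
  A *ᵥ v + B *ᵥ w + ∑ i, w i • (N i *ᵥ v)

/-- Young's inequality bounds the two control terms; the Lyapunov inequality absorbs the rest. -/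
theorem two_mul_dotProduct_mulVec_bilinearVectorField_le {A : Matrix ι ι ℝ} {B : Matrix ι κ ℝ}
    {N : κ → Matrix ι ι ℝ} {P : Matrix ι ι ℝ} (hP : P.PosSemidef)
    (hL : (-(P * B * Bᵀ * P) - (Aᵀ * P + P * A + ∑ i, (N i)ᵀ * P * N i)).PosSemidef)
    (v : ι → ℝ) (w : κ → ℝ) :
    2 * (v ⬝ᵥ P *ᵥ bilinearVectorField A B N v w) ≤ (∑ i, w i ^ 2) * (1 + v ⬝ᵥ P *ᵥ v) := by
  have hvP : v ᵥ* P = P *ᵥ v := by rw [← mulVec_transpose, hP.isSymm.eq]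
  set a := Bᵀ *ᵥ (P *ᵥ v)
  have ha (z : κ → ℝ) : v ⬝ᵥ P *ᵥ (B *ᵥ z) = a ⬝ᵥ z := by
    rw [dotProduct_mulVec, dotProduct_mulVec, hvP, ← mulVec_transpose]
  have hexpand : v ⬝ᵥ P *ᵥ bilinearVectorField A B N v w
      = v ⬝ᵥ P *ᵥ (A *ᵥ v) + a ⬝ᵥ w + ∑ i, w i * (v ⬝ᵥ P *ᵥ (N i *ᵥ v)) := by
    simp only [bilinearVectorField, mulVec_add, dotProduct_add, mulVec_sum, dotProduct_sum,
      mulVec_smul, dotProduct_smul, smul_eq_mul]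
    rw [ha]
  have hlyap : a ⬝ᵥ a + 2 * (v ⬝ᵥ P *ᵥ (A *ᵥ v)) + ∑ i, N i *ᵥ v ⬝ᵥ P *ᵥ (N i *ᵥ v) ≤ 0 := by
    have hBB : v ⬝ᵥ (P * B * Bᵀ * P) *ᵥ v = a ⬝ᵥ a := by
      rw [← mulVec_mulVec, ← mulVec_mulVec, ← mulVec_mulVec, ha]
    have hAP : v ⬝ᵥ (Aᵀ * P) *ᵥ v = v ⬝ᵥ P *ᵥ (A *ᵥ v) := by
      rw [← mulVec_mulVec, dotProduct_transpose_mulVec, dotProduct_mulVec v, hvP, dotProduct_comm]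
    have hPA : v ⬝ᵥ (P * A) *ᵥ v = v ⬝ᵥ P *ᵥ (A *ᵥ v) := by rw [← mulVec_mulVec]
    have hNPN (i : κ) : v ⬝ᵥ ((N i)ᵀ * P * N i) *ᵥ v = N i *ᵥ v ⬝ᵥ P *ᵥ (N i *ᵥ v) := by
      rw [← mulVec_mulVec, ← mulVec_mulVec, dotProduct_transpose_mulVec, dotProduct_comm]
    have h := hL.dotProduct_mulVec_nonneg v
    simp only [star_trivial, sub_mulVec, neg_mulVec, add_mulVec, sum_mulVec, dotProduct_sub,
      dotProduct_neg, dotProduct_add, dotProduct_sum, hBB, hAP, hPA, hNPN] at h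
    linarith
  have hB : 2 * (a ⬝ᵥ w) ≤ a ⬝ᵥ a + ∑ i, w i ^ 2 := by
    classical
    simpa [dotProduct, sq] using PosSemidef.one.two_mul_dotProduct_mulVec_le a w
  have hN (i : κ) : 2 * (w i * (v ⬝ᵥ P *ᵥ (N i *ᵥ v)))
      ≤ w i ^ 2 * (v ⬝ᵥ P *ᵥ v) + N i *ᵥ v ⬝ᵥ P *ᵥ (N i *ᵥ v) := by
    simpa [mulVec_smul, dotProduct_smul, smul_dotProduct, sq, mul_assoc]
      using hP.two_mul_dotProduct_mulVec_le (w i • v) (N i *ᵥ v)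
  have hNsum := Finset.sum_le_sum fun i (_ : i ∈ Finset.univ) => hN i
  rw [← Finset.mul_sum, Finset.sum_add_distrib, ← Finset.sum_mul] at hNsum
  rw [hexpand]
  linarith

end Quadratic

theorem stmt_5_general {n m : ℕ} (T : ℝ)
    (A : Matrix (Fin n) (Fin n) ℝ) (B : Matrix (Fin n) (Fin m) ℝ)
    (N : Fin m → Matrix (Fin n) (Fin n) ℝ)
    (P₂ : Matrix (Fin n) (Fin n) ℝ) (hP : P₂.PosDef)
    (hLyap : ((-(P₂⁻¹ * B * Bᵀ * P₂⁻¹)) -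
        (Aᵀ * P₂⁻¹ + P₂⁻¹ * A + ∑ i, (N i)ᵀ * P₂⁻¹ * N i)).PosSemidef)
    (u : ℝ → Fin m → ℝ) (hu : Continuous u)
    (x : ℝ → Fin n → ℝ)
    (hx0 : x 0 = 0)
    (hx : ∀ t ∈ Set.Icc (0 : ℝ) T,
      HasDerivAt x (A *ᵥ x t + B *ᵥ u t + ∑ i, u t i • (N i *ᵥ x t)) t) :
    ∀ t ∈ Set.Icc (0 : ℝ) T,
      x t ⬝ᵥ P₂⁻¹ *ᵥ x t ≤
        (∫ s in (0 : ℝ)..t, ∑ i, (u s i) ^ 2) *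
          Real.exp (∫ s in (0 : ℝ)..t, ∑ i, (u s i) ^ 2) := by
  have hPinv : P₂⁻¹.PosSemidef := hP.posSemidef.inv
  intro t ht
  have hgronwall := le_mul_exp_integral_of_hasDerivAt_le
    (f := fun s => 1 + x s ⬝ᵥ P₂⁻¹ *ᵥ x s) (by fun_prop)
    (fun r hr => ((hx r hr).dotProduct_mulVec_self hPinv.isSymm).const_add 1)
    (fun r _ => two_mul_dotProduct_mulVec_bilinearVectorField_le hPinv hLyap (x r) (u r)) t ht
  simp only [hx0, mulVec_zero, dotProduct_zero, add_zero, one_mul] at hgronwall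
  linarith [Real.exp_sub_one_le_mul_exp (∫ s in (0 : ℝ)..t, ∑ i, (u s i) ^ 2)]

theorem stmt_5 {n m : ℕ} (T : ℝ) (hT : 0 < T)
    (A : Matrix (Fin n) (Fin n) ℝ) (B : Matrix (Fin n) (Fin m) ℝ)
    (N : Fin m → Matrix (Fin n) (Fin n) ℝ)
    (P₂ : Matrix (Fin n) (Fin n) ℝ) (hP : P₂.PosDef)
    (hLyap : ((-(P₂⁻¹ * B * Bᵀ * P₂⁻¹)) -
        (Aᵀ * P₂⁻¹ + P₂⁻¹ * A + ∑ i, (N i)ᵀ * P₂⁻¹ * N i)).PosSemidef)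
    (u : ℝ → Fin m → ℝ) (hu : Continuous u)
    (x : ℝ → Fin n → ℝ)
    (hx0 : x 0 = 0)
    (hx : ∀ t ∈ Set.Icc (0 : ℝ) T,
      HasDerivAt x (A *ᵥ x t + B *ᵥ u t + ∑ i, u t i • (N i *ᵥ x t)) t) :
    ∀ t ∈ Set.Icc (0 : ℝ) T,
      x t ⬝ᵥ P₂⁻¹ *ᵥ x t ≤
        (∫ s in (0 : ℝ)..t, ∑ i, (u s i) ^ 2) *
          Real.exp (∫ s in (0 : ℝ)..t, ∑ i, (u s i) ^ 2) :=
  stmt_5_general T A B N P₂ hP hLyap u hu x hx0 hx
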